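/- arXiv:quant-ph/0506024 — 3 statements merged into one kernel-verified Lean document; each statement's English description precedes it below -/
import Mathlib

section
/- Let V be a complex Hilbert space and let (P_n), n ∈ ℕ, be a sequence of pairwise commuting orthogonal projections (continuous linear, idempotent, selfadjoint operators) on V. Then there exists a map P assigning to each Borel subset X of 2^ω a continuous linear operator P(X) on V such that: (i) each P(X) is idempotent and selfadjoint; (ii) any two values P(X), P(Y) commute; (iii) P(2^ω) is the identity operator; (iv) P(Xᶜ) = 1 − P(X) for every Borel X; (v) P(X ∩ Y) = P(X) ∘ P(Y) for all Borel X, Y; (vi) for every sequence (X_n) of pairwise disjoint Borel sets and every ψ ∈ V, P(⋃_n X_n)ψ = ∑_n P(X_n)ψ with convergence in norm; and (vii) P({f ∈ 2^ω | f(n) = true}) = P_n for each n ∈ ℕ. -/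
/-!
The projections `Pn n` and `1 - Pn n` multiply out to a finitely additive projection-valued map
`C ↦ P C` on the clopen cylinder sets of `ℕ → Bool`. For a vector `ψ`, `C ↦ ‖P C ψ‖ ^ 2` is then a
finitely additive content on the cylinders; as cylinders are compact it is σ-additive, so it
extends to a finite Borel measure `μ_ψ`. Since `‖P C ψ - P D ψ‖ ^ 2 = μ_ψ (C ∆ D)`, the vectors
`P (C k) ψ` converge whenever the cylinders `C k` approximate a Borel set `X` in `μ_ψ`, and the
limit is `P X ψ`. The algebraic identities pass to the limit along a sequence of cylinders that
approximates `X` simultaneously for the finitely many vectors involved.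
-/

open Filter MeasureTheory Set Topology
open scoped ENNReal symmDiff ComplexInnerProductSpace

noncomputable section

lemma MeasureTheory.IsSetAlgebra.symmDiff_mem {α : Type*} {𝒜 : Set (Set α)}
    (h𝒜 : IsSetAlgebra 𝒜) {s t : Set α} (hs : s ∈ 𝒜) (ht : t ∈ 𝒜) : s ∆ t ∈ 𝒜 := by
  rw [Set.symmDiff_def]
  exact h𝒜.union_mem (h𝒜.sdiff_mem hs ht) (h𝒜.sdiff_mem ht hs)

lemma MeasureTheory.IsSetAlgebra.exists_seq_tendsto_measure_symmDiff {α : Type*}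
    [MeasurableSpace α] {𝒜 : Set (Set α)} (h𝒜 : IsSetAlgebra 𝒜)
    (hgen : ‹MeasurableSpace α› = MeasurableSpace.generateFrom 𝒜) (μ : Measure α)
    [IsFiniteMeasure μ] {X : Set α} (hX : MeasurableSet X) :
    ∃ C : ℕ → Set α, (∀ k, C k ∈ 𝒜) ∧ Tendsto (fun k => μ (X ∆ C k)) atTop (𝓝 0) := by
  have hdense := Measure.MeasureDense.of_generateFrom_isSetAlgebra_finite μ h𝒜 hgen
  choose C hC hlt using fun k : ℕ =>
    hdense.approx X hX (measure_ne_top μ X) (1 / (k + 1)) Nat.one_div_pos_of_nat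
  refine ⟨C, hC, tendsto_of_tendsto_of_tendsto_of_le_of_le tendsto_const_nhds ?_
    (fun _ => zero_le) fun k => (hlt k).le⟩
  simpa using (ENNReal.tendsto_ofReal tendsto_one_div_add_atTop_nhds_zero_nat)

lemma MeasureTheory.isSetAlgebra_measurableSet (α : Type*) [MeasurableSpace α] :
    IsSetAlgebra {s : Set α | MeasurableSet s} where
  empty_mem := MeasurableSet.empty
  compl_mem _ := MeasurableSet.compl
  union_mem _ _ := MeasurableSet.union

lemma MeasureTheory.tendsto_measureReal_of_tendsto_measure_symmDiff {α ι : Type*}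
    [MeasurableSpace α] {μ : Measure α} [IsFiniteMeasure μ] {l : Filter ι} {X : Set α}
    {C : ι → Set α} (h : Tendsto (fun i => μ (X ∆ C i)) l (𝓝 0)) :
    Tendsto (fun i => μ.real (C i)) l (𝓝 (μ.real X)) := by
  refine tendsto_iff_dist_tendsto_zero.2 (squeeze_zero (fun _ => dist_nonneg) (fun i => ?_)
    ((ENNReal.tendsto_toReal ENNReal.zero_ne_top).comp h))
  have h₁ := measureReal_symmDiff_le (μ := μ) (s := X) (t := C i) ∅
  have h₂ := measureReal_symmDiff_le (μ := μ) (s := C i) (t := X) ∅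
  simp only [← bot_eq_empty, symmDiff_bot, symmDiff_comm (C i) X] at h₁ h₂
  rw [Real.dist_eq, abs_le, Function.comp_apply, ← measureReal_def]
  constructor <;> linarith

lemma MeasureTheory.tendsto_measure_iUnion_sdiff_biUnion_range {α : Type*} [MeasurableSpace α]
    (μ : Measure α) [IsFiniteMeasure μ] {X : ℕ → Set α} (hX : ∀ n, MeasurableSet (X n)) :
    Tendsto (fun N => μ ((⋃ n, X n) \ ⋃ n ∈ Finset.range N, X n)) atTop (𝓝 0) := by
  have hanti : Antitone fun N => (⋃ n, X n) \ ⋃ n ∈ Finset.range N, X n := fun M N hMN =>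
    sdiff_subset_sdiff_right (biUnion_subset_biUnion_left (by simpa using hMN))
  have hempty : ⋂ N, ((⋃ n, X n) \ ⋃ n ∈ Finset.range N, X n) = ∅ := by
    refine eq_empty_of_forall_notMem fun x hx => ?_
    obtain ⟨n, hn⟩ := mem_iUnion.1 (mem_iInter.1 hx 0).1
    exact (mem_iInter.1 hx (n + 1)).2 (mem_biUnion (by simp) hn)
  have hmeas N : MeasurableSet ((⋃ n, X n) \ ⋃ n ∈ Finset.range N, X n) :=
    (MeasurableSet.iUnion hX).diff (Finset.measurableSet_biUnion _ fun n _ => hX n)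
  have h := tendsto_measure_iInter_atTop (fun N => (hmeas N).nullMeasurableSet) hanti
    ⟨0, measure_ne_top μ _⟩
  rwa [hempty, measure_empty] at h

lemma tendsto_clm_apply_of_norm_le {ι 𝕜 E F : Type*} [NontriviallyNormedField 𝕜]
    [SeminormedAddCommGroup E] [NormedSpace 𝕜 E] [SeminormedAddCommGroup F] [NormedSpace 𝕜 F]
    {l : Filter ι} {A : ι → E →L[𝕜] F} {c : ℝ} (hA : ∀ i, ‖A i‖ ≤ c) {v : ι → E} {w : E}
    {a : F} (hv : Tendsto v l (𝓝 w)) (hw : Tendsto (fun i => A i w) l (𝓝 a)) :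
    Tendsto (fun i => A i (v i)) l (𝓝 a) := by
  refine tendsto_of_tendsto_of_dist hw (squeeze_zero (fun _ => dist_nonneg) (fun i => ?_)
    (by simpa using (tendsto_iff_dist_tendsto_zero.1 hv).const_mul c))
  rw [dist_comm (v i)]
  exact ((A i).dist_le_opNorm w (v i)).trans (mul_le_mul_of_nonneg_right (hA i) dist_nonneg)

structure IsSpectralContent {α A : Type*} [Ring A] [Star A] (𝒜 : Set (Set α))
    (Q : Set α → A) : Prop where
  map_univ : Q univ = 1
  map_inter : ∀ ⦃s t⦄, s ∈ 𝒜 → t ∈ 𝒜 → Q (s ∩ t) = Q s * Q t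
  map_compl : ∀ ⦃s⦄, s ∈ 𝒜 → Q sᶜ = 1 - Q s
  isSelfAdjoint : ∀ ⦃s⦄, s ∈ 𝒜 → IsSelfAdjoint (Q s)

namespace IsSpectralContent

section Ring

variable {α A : Type*} [Ring A] [Star A] {𝒜 : Set (Set α)} {Q : Set α → A} {s t : Set α}

lemma isStarProjection (hQ : IsSpectralContent 𝒜 Q) (hs : s ∈ 𝒜) : IsStarProjection (Q s) :=
  ⟨by rw [IsIdempotentElem, ← hQ.map_inter hs hs, inter_self], hQ.isSelfAdjoint hs⟩

lemma commute (hQ : IsSpectralContent 𝒜 Q) (hs : s ∈ 𝒜) (ht : t ∈ 𝒜) : Commute (Q s) (Q t) := by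
  rw [Commute, SemiconjBy, ← hQ.map_inter hs ht, ← hQ.map_inter ht hs, inter_comm]

lemma map_empty (hQ : IsSpectralContent 𝒜 Q) (h𝒜 : IsSetAlgebra 𝒜) : Q ∅ = 0 := by
  rw [← compl_univ, hQ.map_compl h𝒜.univ_mem, hQ.map_univ, sub_self]

lemma map_union (hQ : IsSpectralContent 𝒜 Q) (h𝒜 : IsSetAlgebra 𝒜) (hs : s ∈ 𝒜) (ht : t ∈ 𝒜)
    (hst : Disjoint s t) : Q (s ∪ t) = Q s + Q t := by
  have hmul : Q s * Q t = 0 := by rw [← hQ.map_inter hs ht, hst.inter_eq, hQ.map_empty h𝒜]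
  calc Q (s ∪ t) = 1 - Q (s ∪ t)ᶜ := by rw [hQ.map_compl (h𝒜.union_mem hs ht), sub_sub_cancel]
    _ = 1 - (1 - Q s) * (1 - Q t) := by
      rw [compl_union, hQ.map_inter (h𝒜.compl_mem hs) (h𝒜.compl_mem ht), hQ.map_compl hs,
        hQ.map_compl ht]
    _ = Q s + Q t - Q s * Q t := by noncomm_ring
    _ = Q s + Q t := by rw [hmul, sub_zero]

lemma map_biUnion_finset {ι : Type*} (hQ : IsSpectralContent 𝒜 Q) (h𝒜 : IsSetAlgebra 𝒜)
    {s : ι → Set α} {S : Finset ι} (hs : ∀ i ∈ S, s i ∈ 𝒜)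
    (hS : (S : Set ι).PairwiseDisjoint s) : Q (⋃ i ∈ S, s i) = ∑ i ∈ S, Q (s i) :=
  addContent_biUnion_eq (m := h𝒜.isSetRing.addContent_of_union Q (hQ.map_empty h𝒜)
    (hQ.map_union h𝒜)) h𝒜.isSetRing hs hS

end Ring

section Hilbert

variable {α E : Type*} [NormedAddCommGroup E] [InnerProductSpace ℂ E] [CompleteSpace E]
  {𝒜 : Set (Set α)} {Q : Set α → E →L[ℂ] E} {s t : Set α}

lemma norm_le_one (hQ : IsSpectralContent 𝒜 Q) (hs : s ∈ 𝒜) : ‖Q s‖ ≤ 1 :=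
  (hQ.isStarProjection hs).norm_le

lemma norm_map_apply_le (hQ : IsSpectralContent 𝒜 Q) (hs : s ∈ 𝒜) (ψ : E) : ‖Q s ψ‖ ≤ ‖ψ‖ := by
  simpa using (Q s).le_of_opNorm_le (hQ.norm_le_one hs) ψ

lemma inner_map_apply_map_apply (hQ : IsSpectralContent 𝒜 Q) (hs : s ∈ 𝒜) (ht : t ∈ 𝒜)
    (ψ φ : E) : ⟪Q s ψ, Q t φ⟫ = ⟪ψ, Q (s ∩ t) φ⟫ := by
  rw [hQ.map_inter hs ht, mul_apply_eq_comp]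
  exact (hQ.isSelfAdjoint hs).isSymmetric ψ (Q t φ)

lemma inner_map_apply_map_apply_of_disjoint (hQ : IsSpectralContent 𝒜 Q) (h𝒜 : IsSetAlgebra 𝒜)
    (hs : s ∈ 𝒜) (ht : t ∈ 𝒜) (hst : Disjoint s t) (ψ φ : E) : ⟪Q s ψ, Q t φ⟫ = 0 := by
  rw [hQ.inner_map_apply_map_apply hs ht, hst.inter_eq, hQ.map_empty h𝒜,
    zero_apply, inner_zero_right]

lemma norm_map_union_apply_sq (hQ : IsSpectralContent 𝒜 Q) (h𝒜 : IsSetAlgebra 𝒜) (hs : s ∈ 𝒜)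
    (ht : t ∈ 𝒜) (hst : Disjoint s t) (ψ : E) :
    ‖Q (s ∪ t) ψ‖ ^ 2 = ‖Q s ψ‖ ^ 2 + ‖Q t ψ‖ ^ 2 := by
  rw [hQ.map_union h𝒜 hs ht hst, add_apply]
  simpa only [sq] using norm_add_sq_eq_norm_sq_add_norm_sq_of_inner_eq_zero _ _
    (hQ.inner_map_apply_map_apply_of_disjoint h𝒜 hs ht hst ψ ψ)

lemma norm_map_apply_sub_map_apply (hQ : IsSpectralContent 𝒜 Q) (h𝒜 : IsSetAlgebra 𝒜)
    (hs : s ∈ 𝒜) (ht : t ∈ 𝒜) (ψ : E) : ‖Q s ψ - Q t ψ‖ = ‖Q (s ∆ t) ψ‖ := by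
  have hsplit {u v : Set α} (hu : u ∈ 𝒜) (hv : v ∈ 𝒜) : Q u = Q (u ∩ v) + Q (u \ v) := by
    rw [← hQ.map_union h𝒜 (h𝒜.inter_mem hu hv) (h𝒜.sdiff_mem hu hv)
      (disjoint_sdiff_right.mono_left inter_subset_right), inter_union_sdiff]
  rw [hsplit hs ht, hsplit ht hs, inter_comm, Set.symmDiff_def,
    hQ.map_union h𝒜 (h𝒜.sdiff_mem hs ht) (h𝒜.sdiff_mem ht hs) disjoint_sdiff_sdiff]
  simp only [add_apply, add_sub_add_left_eq_sub]
  exact norm_sub_eq_norm_add (hQ.inner_map_apply_map_apply_of_disjoint h𝒜 (h𝒜.sdiff_mem ht hs)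
    (h𝒜.sdiff_mem hs ht) disjoint_sdiff_sdiff ψ ψ)

end Hilbert

end IsSpectralContent

structure SpectralPremeasure (α E : Type*) [MeasurableSpace α] [NormedAddCommGroup E]
    [InnerProductSpace ℂ E] [CompleteSpace E] where
  domain : Set (Set α)
  isSetAlgebra : IsSetAlgebra domain
  isCompactSystem : IsCompactSystem domain
  measurableSpace_eq : ‹MeasurableSpace α› = MeasurableSpace.generateFrom domain
  proj : Set α → E →L[ℂ] E
  isSpectralContent : IsSpectralContent domain proj

namespace SpectralPremeasure

variable {α E : Type*} [MeasurableSpace α] [NormedAddCommGroup E] [InnerProductSpace ℂ E]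
  [CompleteSpace E] (Q : SpectralPremeasure α E) {s t X Y : Set α}

lemma measurableSet_of_mem (hs : s ∈ Q.domain) : MeasurableSet s :=
  Q.measurableSpace_eq ▸ MeasurableSpace.measurableSet_generateFrom hs

def content (ψ : E) : AddContent ℝ≥0∞ Q.domain :=
  Q.isSetAlgebra.isSetRing.addContent_of_union (fun s => ENNReal.ofReal (‖Q.proj s ψ‖ ^ 2))
    (by simp [Q.isSpectralContent.map_empty Q.isSetAlgebra]) fun hs ht hst => by
      rw [Q.isSpectralContent.norm_map_union_apply_sq Q.isSetAlgebra hs ht hst,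
        ENNReal.ofReal_add (sq_nonneg _) (sq_nonneg _)]

/-- A decreasing sequence in `Q.domain` with empty intersection is eventually empty, so the
content is trivially continuous at `∅`. -/
lemma isSigmaSubadditive_content (ψ : E) : (Q.content ψ).IsSigmaSubadditive := by
  have hring := Q.isSetAlgebra.isSetRing
  refine isSigmaSubadditive_of_addContent_iUnion_eq_tsum hring fun f hf hU hd =>
    addContent_iUnion_eq_sum_of_tendsto_zero hring _ (fun _ _ => ENNReal.ofReal_ne_top) ?_ hf hU hd
  intro u hu hanti hempty
  obtain ⟨n, hn⟩ := (exists_dissipate_eq_empty_iff_of_directed hanti.directed_ge).1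
    (Q.isCompactSystem u hu hempty)
  refine tendsto_atTop_of_eventually_const (i₀ := n) fun k hk => ?_
  rw [subset_empty_iff.1 ((hanti hk).trans hn.subset), addContent_empty]

def measure (ψ : E) : Measure α :=
  (Q.content ψ).measure Q.isSetAlgebra.isSetRing.isSetSemiring Q.measurableSpace_eq.le
    (Q.isSigmaSubadditive_content ψ)

lemma measure_eq (hs : s ∈ Q.domain) (ψ : E) :
    Q.measure ψ s = ENNReal.ofReal (‖Q.proj s ψ‖ ^ 2) :=
  AddContent.measure_eq _ _ Q.measurableSpace_eq _ hs

instance (ψ : E) : IsFiniteMeasure (Q.measure ψ) :=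
  ⟨by rw [Q.measure_eq Q.isSetAlgebra.univ_mem]; exact ENNReal.ofReal_lt_top⟩

lemma measureReal_eq (hs : s ∈ Q.domain) (ψ : E) : (Q.measure ψ).real s = ‖Q.proj s ψ‖ ^ 2 := by
  rw [measureReal_def, Q.measure_eq hs, ENNReal.toReal_ofReal (sq_nonneg _)]

lemma dist_proj_apply_le (hs : s ∈ Q.domain) (ht : t ∈ Q.domain) (X : Set α) (ψ : E) :
    dist (Q.proj s ψ) (Q.proj t ψ) ≤
      √((Q.measure ψ).real (X ∆ s) + (Q.measure ψ).real (X ∆ t)) := by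
  rw [dist_eq_norm, Q.isSpectralContent.norm_map_apply_sub_map_apply Q.isSetAlgebra hs ht,
    ← Real.sqrt_sq (norm_nonneg _), ← Q.measureReal_eq (Q.isSetAlgebra.symmDiff_mem hs ht)]
  gcongr
  simpa only [symmDiff_comm X s] using
    measureReal_symmDiff_le (μ := Q.measure ψ) (s := s) (t := X) t

lemma tendsto_dist_proj_apply {ι : Type*} {l : Filter ι} {C D : ι → Set α}
    (hC : ∀ i, C i ∈ Q.domain) (hD : ∀ i, D i ∈ Q.domain) {ψ : E}
    (hCX : Tendsto (fun i => Q.measure ψ (X ∆ C i)) l (𝓝 0))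
    (hDX : Tendsto (fun i => Q.measure ψ (X ∆ D i)) l (𝓝 0)) :
    Tendsto (fun i => dist (Q.proj (C i) ψ) (Q.proj (D i) ψ)) l (𝓝 0) := by
  have hreal {U : ι → Set α} (h : Tendsto (fun i => Q.measure ψ (X ∆ U i)) l (𝓝 0)) :
      Tendsto (fun i => (Q.measure ψ).real (X ∆ U i)) l (𝓝 0) :=
    (ENNReal.tendsto_toReal ENNReal.zero_ne_top).comp h
  refine squeeze_zero (fun _ => dist_nonneg) (fun i => Q.dist_proj_apply_le (hC i) (hD i) X ψ) ?_
  simpa using ((hreal hCX).add (hreal hDX)).sqrt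

open Classical in
def extendApply (X : Set α) (ψ : E) : E :=
  if h : ∃ C : ℕ → Set α, (∀ k, C k ∈ Q.domain) ∧
      Tendsto (fun k => Q.measure ψ (X ∆ C k)) atTop (𝓝 0) then
    limUnder atTop fun k => Q.proj (h.choose k) ψ
  else 0

lemma tendsto_extendApply {C : ℕ → Set α} (hC : ∀ k, C k ∈ Q.domain) {ψ : E}
    (hCX : Tendsto (fun k => Q.measure ψ (X ∆ C k)) atTop (𝓝 0)) :
    Tendsto (fun k => Q.proj (C k) ψ) atTop (𝓝 (Q.extendApply X ψ)) := by
  have h : ∃ C : ℕ → Set α, (∀ k, C k ∈ Q.domain) ∧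
      Tendsto (fun k => Q.measure ψ (X ∆ C k)) atTop (𝓝 0) := ⟨C, hC, hCX⟩
  obtain ⟨hD, hDX⟩ := h.choose_spec
  have hcauchy : CauchySeq fun k => Q.proj (h.choose k) ψ :=
    cauchySeq_iff_tendsto_dist_atTop_0.2 <| by
      rw [← prod_atTop_atTop_eq]
      exact Q.tendsto_dist_proj_apply (C := fun k : ℕ × ℕ => h.choose k.1)
        (D := fun k : ℕ × ℕ => h.choose k.2) (fun k => hD k.1) (fun k => hD k.2)
        (hDX.comp tendsto_fst) (hDX.comp tendsto_snd)
  rw [extendApply, dif_pos h]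
  exact tendsto_of_tendsto_of_dist hcauchy.tendsto_limUnder
    (Q.tendsto_dist_proj_apply hD hC hDX hCX)

lemma exists_seq_tendsto_measure_symmDiff (hX : MeasurableSet X) (S : Finset E) :
    ∃ C : ℕ → Set α, (∀ k, C k ∈ Q.domain) ∧
      ∀ ψ ∈ S, Tendsto (fun k => Q.measure ψ (X ∆ C k)) atTop (𝓝 0) := by
  obtain ⟨C, hC, hCX⟩ := Q.isSetAlgebra.exists_seq_tendsto_measure_symmDiff Q.measurableSpace_eq
    (∑ ψ ∈ S, Q.measure ψ) hX
  refine ⟨C, hC, fun ψ hψ => tendsto_of_tendsto_of_tendsto_of_le_of_le tendsto_const_nhds hCX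
    (fun _ => zero_le) fun k => ?_⟩
  rw [Measure.coe_finsetSum, Finset.sum_apply]
  exact Finset.single_le_sum (f := fun φ => Q.measure φ (X ∆ C k)) (fun _ _ => zero_le) hψ

lemma extendApply_add (hX : MeasurableSet X) (ψ φ : E) :
    Q.extendApply X (ψ + φ) = Q.extendApply X ψ + Q.extendApply X φ := by
  classical
  obtain ⟨C, hC, hCX⟩ := Q.exists_seq_tendsto_measure_symmDiff hX {ψ, φ, ψ + φ}
  refine tendsto_nhds_unique (Q.tendsto_extendApply hC (hCX _ (by simp))) ?_
  simpa only [map_add] using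
    (Q.tendsto_extendApply hC (hCX ψ (by simp))).add (Q.tendsto_extendApply hC (hCX φ (by simp)))

lemma extendApply_smul (hX : MeasurableSet X) (c : ℂ) (ψ : E) :
    Q.extendApply X (c • ψ) = c • Q.extendApply X ψ := by
  classical
  obtain ⟨C, hC, hCX⟩ := Q.exists_seq_tendsto_measure_symmDiff hX {ψ, c • ψ}
  refine tendsto_nhds_unique (Q.tendsto_extendApply hC (hCX _ (by simp))) ?_
  simpa only [map_smul] using (Q.tendsto_extendApply hC (hCX ψ (by simp))).const_smul c

lemma norm_extendApply_le (hX : MeasurableSet X) (ψ : E) : ‖Q.extendApply X ψ‖ ≤ ‖ψ‖ := by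
  obtain ⟨C, hC, hCX⟩ := Q.exists_seq_tendsto_measure_symmDiff hX {ψ}
  exact le_of_tendsto (Q.tendsto_extendApply hC (hCX ψ (by simp))).norm
    (Eventually.of_forall fun k => Q.isSpectralContent.norm_map_apply_le (hC k) ψ)

open Classical in
/-- Junk value `0` on non-measurable sets. -/
def extend (X : Set α) : E →L[ℂ] E :=
  if hX : MeasurableSet X then
    LinearMap.mkContinuous
      { toFun := Q.extendApply X
        map_add' := Q.extendApply_add hX
        map_smul' := Q.extendApply_smul hX } 1
      fun ψ => by simpa using Q.norm_extendApply_le hX ψ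
  else 0

lemma tendsto_proj_apply_extend (hX : MeasurableSet X) {C : ℕ → Set α}
    (hC : ∀ k, C k ∈ Q.domain) {ψ : E}
    (hCX : Tendsto (fun k => Q.measure ψ (X ∆ C k)) atTop (𝓝 0)) :
    Tendsto (fun k => Q.proj (C k) ψ) atTop (𝓝 (Q.extend X ψ)) := by
  simpa [extend, hX] using Q.tendsto_extendApply hC hCX

lemma extend_of_mem (hs : s ∈ Q.domain) : Q.extend s = Q.proj s := by
  ext ψ
  exact tendsto_nhds_unique (Q.tendsto_proj_apply_extend (Q.measurableSet_of_mem hs)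
    (fun _ => hs) (by simp)) tendsto_const_nhds

lemma extend_compl (hX : MeasurableSet X) : Q.extend Xᶜ = 1 - Q.extend X := by
  ext ψ
  obtain ⟨C, hC, hCX⟩ := Q.exists_seq_tendsto_measure_symmDiff hX {ψ}
  have hCX := hCX ψ (by simp)
  refine tendsto_nhds_unique (Q.tendsto_proj_apply_extend hX.compl
    (fun k => Q.isSetAlgebra.compl_mem (hC k)) (C := fun k => (C k)ᶜ) ?_) ?_
  · simpa only [compl_symmDiff_compl] using hCX
  · simpa [Q.isSpectralContent.map_compl (hC _)] using
      tendsto_const_nhds.sub (Q.tendsto_proj_apply_extend hX hC hCX)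

lemma extend_inter (hX : MeasurableSet X) (hY : MeasurableSet Y) :
    Q.extend (X ∩ Y) = Q.extend X * Q.extend Y := by
  classical
  ext ψ
  obtain ⟨D, hD, hDY⟩ := Q.exists_seq_tendsto_measure_symmDiff hY {ψ}
  -- `C` also approximates `X` for `Q.extend Y ψ`, the limit of the vectors `Q.proj (C k)` acts on.
  obtain ⟨C, hC, hCX⟩ := Q.exists_seq_tendsto_measure_symmDiff hX {ψ, Q.extend Y ψ}
  have hDY := hDY ψ (by simp)
  have hCD : Tendsto (fun k => Q.measure ψ ((X ∩ Y) ∆ (C k ∩ D k))) atTop (𝓝 0) := by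
    refine tendsto_of_tendsto_of_tendsto_of_le_of_le tendsto_const_nhds
      (by simpa using (hCX ψ (by simp)).add hDY) (fun _ => zero_le) fun k => ?_
    refine (measure_mono fun x hx => ?_).trans (measure_union_le _ _)
    simp only [Set.mem_symmDiff, Set.mem_inter_iff, Set.mem_union] at hx ⊢
    tauto
  refine tendsto_nhds_unique (Q.tendsto_proj_apply_extend (hX.inter hY)
    (fun k => Q.isSetAlgebra.inter_mem (hC k) (hD k)) hCD) ?_
  simp only [Q.isSpectralContent.map_inter (hC _) (hD _), mul_apply_eq_comp]
  exact tendsto_clm_apply_of_norm_le (fun k => Q.isSpectralContent.norm_le_one (hC k))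
    (Q.tendsto_proj_apply_extend hY hD hDY)
    (Q.tendsto_proj_apply_extend hX hC (hCX _ (by simp)))

lemma isSelfAdjoint_extend (hX : MeasurableSet X) : IsSelfAdjoint (Q.extend X) := by
  classical
  refine ContinuousLinearMap.isSelfAdjoint_iff_isSymmetric.2 fun ψ φ => ?_
  obtain ⟨C, hC, hCX⟩ := Q.exists_seq_tendsto_measure_symmDiff hX {ψ, φ}
  refine tendsto_nhds_unique
    ((Q.tendsto_proj_apply_extend hX hC (hCX ψ (by simp))).inner tendsto_const_nhds) ?_
  exact (tendsto_const_nhds.inner (Q.tendsto_proj_apply_extend hX hC (hCX φ (by simp)))).congr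
    fun k => ((Q.isSpectralContent.isSelfAdjoint (hC k)).isSymmetric ψ φ).symm

lemma isSpectralContent_extend : IsSpectralContent {s | MeasurableSet s} Q.extend where
  map_univ := by
    rw [Q.extend_of_mem Q.isSetAlgebra.univ_mem, Q.isSpectralContent.map_univ]
  map_inter _ _ := Q.extend_inter
  map_compl _ := Q.extend_compl
  isSelfAdjoint _ := Q.isSelfAdjoint_extend

lemma norm_extend_apply_sq (hX : MeasurableSet X) (ψ : E) :
    ‖Q.extend X ψ‖ ^ 2 = (Q.measure ψ).real X := by
  obtain ⟨C, hC, hCX⟩ := Q.exists_seq_tendsto_measure_symmDiff hX {ψ}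
  have hCX := hCX ψ (by simp)
  refine tendsto_nhds_unique ((Q.tendsto_proj_apply_extend hX hC hCX).norm.pow 2) ?_
  simpa only [← Q.measureReal_eq (hC _)] using tendsto_measureReal_of_tendsto_measure_symmDiff hCX

lemma tendsto_extend_apply_zero {ι : Type*} {l : Filter ι} {T : ι → Set α}
    (hT : ∀ i, MeasurableSet (T i)) {ψ : E} (h : Tendsto (fun i => Q.measure ψ (T i)) l (𝓝 0)) :
    Tendsto (fun i => Q.extend (T i) ψ) l (𝓝 0) := by
  have hnorm i : ‖Q.extend (T i) ψ‖ = √((Q.measure ψ).real (T i)) := by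
    rw [← Q.norm_extend_apply_sq (hT i), Real.sqrt_sq (norm_nonneg _)]
  refine tendsto_zero_iff_norm_tendsto_zero.2 ?_
  simpa [hnorm, measureReal_def] using ((ENNReal.tendsto_toReal ENNReal.zero_ne_top).comp h).sqrt

theorem tendsto_sum_extend_apply {X : ℕ → Set α} (hX : ∀ n, MeasurableSet (X n))
    (hdisj : Pairwise (Function.onFun Disjoint X)) (ψ : E) :
    Tendsto (fun N => ∑ n ∈ Finset.range N, Q.extend (X n) ψ) atTop
      (𝓝 (Q.extend (⋃ n, X n) ψ)) := by
  have hP := Q.isSpectralContent_extend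
  have hmeas := isSetAlgebra_measurableSet α
  have hB N : MeasurableSet (⋃ n ∈ Finset.range N, X n) :=
    Finset.measurableSet_biUnion _ fun n _ => hX n
  have hT N : MeasurableSet ((⋃ n, X n) \ ⋃ n ∈ Finset.range N, X n) :=
    (MeasurableSet.iUnion hX).diff (hB N)
  have hsum N : ∑ n ∈ Finset.range N, Q.extend (X n) ψ =
      Q.extend (⋃ n, X n) ψ - Q.extend ((⋃ n, X n) \ ⋃ n ∈ Finset.range N, X n) ψ := by
    rw [eq_sub_iff_add_eq, ← sum_apply,
      ← hP.map_biUnion_finset hmeas (fun n _ => hX n) (hdisj.set_pairwise _), ← add_apply,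
      ← hP.map_union hmeas (hB N) (hT N) disjoint_sdiff_right,
      union_sdiff_cancel (iUnion₂_subset fun n _ => subset_iUnion X n)]
  simpa [hsum] using tendsto_const_nhds.sub
    (Q.tendsto_extend_apply_zero hT (tendsto_measure_iUnion_sdiff_biUnion_range _ hX))

end SpectralPremeasure

namespace CantorSpace

def IsCylinder (N : ℕ) (X : Set (ℕ → Bool)) : Prop :=
  ∀ ⦃f g : ℕ → Bool⦄, (∀ i < N, f i = g i) → f ∈ X → g ∈ X

def cylinders : Set (Set (ℕ → Bool)) := {X | ∃ N, IsCylinder N X}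

lemma isCylinder_univ (N : ℕ) : IsCylinder N univ := fun _ _ _ h => h

lemma isCylinder_coord (n : ℕ) (b : Bool) : IsCylinder (n + 1) {f | f n = b} :=
  fun _ _ hfg hf => (hfg n n.lt_succ_self).symm.trans hf

namespace IsCylinder

variable {N M : ℕ} {X Y : Set (ℕ → Bool)}

lemma mono (hNM : N ≤ M) (hX : IsCylinder N X) : IsCylinder M X :=
  fun _ _ hfg => hX fun i hi => hfg i (hi.trans_le hNM)

lemma compl (hX : IsCylinder N X) : IsCylinder N Xᶜ :=
  fun _ _ hfg hf hg => hf (hX (fun i hi => (hfg i hi).symm) hg)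

lemma inter (hX : IsCylinder N X) (hY : IsCylinder N Y) : IsCylinder N (X ∩ Y) :=
  fun _ _ hfg hf => ⟨hX hfg hf.1, hY hfg hf.2⟩

lemma union (hX : IsCylinder N X) (hY : IsCylinder N Y) : IsCylinder N (X ∪ Y) :=
  fun _ _ hfg hf => hf.imp (hX hfg) (hY hfg)

lemma preimage_update (hX : IsCylinder N X) (b : Bool) :
    (Function.update · N b) ⁻¹' X = X := by
  ext f
  have hagree : ∀ i < N, f i = Function.update f N b i := fun i hi =>
    (Function.update_of_ne hi.ne _ _).symm
  exact ⟨hX fun i hi => (hagree i hi).symm, hX hagree⟩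

lemma isOpen (hX : IsCylinder N X) : IsOpen X := by
  refine isOpen_iff_forall_mem_open.2 fun f hf => ⟨(Iio N).pi fun i => {f i}, fun g hg =>
    hX (fun i hi => (hg i hi).symm) hf, isOpen_set_pi (finite_Iio N) fun _ _ => isOpen_discrete _,
    fun i _ => rfl⟩

lemma isClosed (hX : IsCylinder N X) : IsClosed X :=
  isOpen_compl_iff.1 hX.compl.isOpen

end IsCylinder

lemma isSetAlgebra_cylinders : IsSetAlgebra cylinders where
  empty_mem := ⟨0, fun _ _ _ h => h⟩
  compl_mem _ := fun ⟨N, hX⟩ => ⟨N, hX.compl⟩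
  union_mem _ _ := fun ⟨N, hX⟩ ⟨M, hY⟩ =>
    ⟨max N M, (hX.mono (le_max_left N M)).union (hY.mono (le_max_right N M))⟩

lemma isCompactSystem_cylinders : IsCompactSystem cylinders :=
  (isCompactSystem_isCompact_isClosed _).mono fun _ ⟨_, hX⟩ => ⟨hX.isClosed.isCompact, hX.isClosed⟩

lemma measurableSpace_eq_generateFrom_cylinders :
    (inferInstance : MeasurableSpace (ℕ → Bool)) = MeasurableSpace.generateFrom cylinders := by
  refine le_antisymm ?_ (MeasurableSpace.generateFrom_le fun _ ⟨_, hX⟩ => hX.isOpen.measurableSet)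
  refine (MeasurableSpace.pi_eq_generateFrom_projections (α := fun _ : ℕ => Bool)).le.trans
    (MeasurableSpace.generateFrom_le ?_)
  rintro _ ⟨n, A, -, rfl⟩
  refine MeasurableSpace.measurableSet_generateFrom ⟨n + 1, fun f g hfg hf => ?_⟩
  rwa [mem_preimage, Function.eval, ← hfg n n.lt_succ_self]

section Ring

variable {A : Type*} [Ring A] (p : ℕ → A)

def coordProj (n : ℕ) (b : Bool) : A := if b then p n else 1 - p n

open Classical in
/-- At level `0` the only cylinders are `∅` and `univ`, which one point tells apart. -/
def levelProj : ℕ → Set (ℕ → Bool) → A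
  | 0, X => if (fun _ => false) ∈ X then 1 else 0
  | N + 1, X => ∑ b : Bool, levelProj N ((Function.update · N b) ⁻¹' X) * coordProj p N b

open Classical in
def cylinderProj (X : Set (ℕ → Bool)) : A :=
  if h : ∃ N, IsCylinder N X then levelProj p h.choose X else 0

lemma sum_coordProj (n : ℕ) : ∑ b, coordProj p n b = 1 := by
  simp [coordProj]

lemma levelProj_univ (N : ℕ) : levelProj p N univ = 1 := by
  induction N with
  | zero => simp [levelProj]
  | succ N ih => simp only [levelProj, preimage_univ, ih, one_mul, sum_coordProj]

lemma levelProj_compl (N : ℕ) (X : Set (ℕ → Bool)) : levelProj p N Xᶜ = 1 - levelProj p N X := by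
  induction N generalizing X with
  | zero => by_cases hX : (fun _ => false) ∈ X <;> simp [levelProj, hX]
  | succ N ih =>
    simp only [levelProj, preimage_compl, ih, sub_mul, one_mul, Finset.sum_sub_distrib,
      sum_coordProj]

lemma IsCylinder.levelProj_eq {N M : ℕ} {X : Set (ℕ → Bool)} (hNM : N ≤ M) (hX : IsCylinder N X) :
    levelProj p M X = levelProj p N X := by
  induction M, hNM using Nat.le_induction with
  | base => rfl
  | succ M hNM ih =>
    simp only [levelProj, (hX.mono hNM).preimage_update, ← Finset.mul_sum, sum_coordProj, mul_one,
      ih]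

lemma IsCylinder.cylinderProj_eq {N : ℕ} {X : Set (ℕ → Bool)} (hX : IsCylinder N X) :
    cylinderProj p X = levelProj p N X := by
  have h : ∃ N, IsCylinder N X := ⟨N, hX⟩
  rw [cylinderProj, dif_pos h, ← (h.choose_spec).levelProj_eq p (le_max_left _ N),
    hX.levelProj_eq p (le_max_right _ N)]

lemma cylinderProj_coord (n : ℕ) : cylinderProj p {f | f n = true} = p n := by
  have hfalse : (Function.update · n false) ⁻¹' {f : ℕ → Bool | f n = true} = ∅ := by
    ext; simp
  have htrue : (Function.update · n true) ⁻¹' {f : ℕ → Bool | f n = true} = univ := by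
    ext; simp
  rw [(isCylinder_coord n true).cylinderProj_eq, levelProj, Fintype.sum_bool, htrue, hfalse,
    ← compl_univ, levelProj_compl, levelProj_univ]
  simp [coordProj]

variable {p}

lemma commute_coordProj (hc : ∀ m n, Commute (p m) (p n)) (m n : ℕ) (b b' : Bool) :
    Commute (coordProj p m b) (coordProj p n b') := by
  have h₁ := (Commute.one_left _).sub_left (hc m n)
  cases b <;> cases b' <;> simp only [coordProj, Bool.false_eq_true, if_true, if_false]
  exacts [(Commute.one_right _).sub_right h₁, h₁, (Commute.one_right _).sub_right (hc m n), hc m n]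

lemma coordProj_mul_coordProj (hp : ∀ n, IsIdempotentElem (p n)) (n : ℕ) (b b' : Bool) :
    coordProj p n b * coordProj p n b' = if b = b' then coordProj p n b else 0 := by
  cases b <;> cases b' <;> simp only [coordProj, Bool.false_eq_true, if_true, if_false,
    reduceCtorEq]
  exacts [(hp n).one_sub, (hp n).one_sub_mul_self, (hp n).mul_one_sub_self, hp n]

lemma commute_coordProj_levelProj (hc : ∀ m n, Commute (p m) (p n)) (m : ℕ) (b : Bool) (N : ℕ)
    (X : Set (ℕ → Bool)) : Commute (coordProj p m b) (levelProj p N X) := by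
  induction N generalizing X with
  | zero => rw [levelProj]; split_ifs <;> simp
  | succ N ih =>
    exact Commute.sum_right _ _ _ fun b' _ => (ih _).mul_right (commute_coordProj hc m N b b')

lemma levelProj_inter (hp : ∀ n, IsIdempotentElem (p n)) (hc : ∀ m n, Commute (p m) (p n))
    (N : ℕ) (X Y : Set (ℕ → Bool)) :
    levelProj p N (X ∩ Y) = levelProj p N X * levelProj p N Y := by
  induction N generalizing X Y with
  | zero =>
    simp only [levelProj, mem_inter_iff]
    split_ifs <;> simp_all
  | succ N ih =>
    simp only [levelProj, preimage_inter, ih, Finset.sum_mul_sum]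
    refine Finset.sum_congr rfl fun b _ => ?_
    have hterm (b' : Bool) : levelProj p N ((Function.update · N b) ⁻¹' X) * coordProj p N b *
        (levelProj p N ((Function.update · N b') ⁻¹' Y) * coordProj p N b') =
        levelProj p N ((Function.update · N b) ⁻¹' X) *
          (levelProj p N ((Function.update · N b') ⁻¹' Y) *
            (coordProj p N b * coordProj p N b')) := by
      rw [mul_assoc, ← mul_assoc (coordProj p N b),
        (commute_coordProj_levelProj hc N b N _).eq, mul_assoc]
    simp only [hterm, coordProj_mul_coordProj hp, mul_ite, mul_zero, Finset.sum_ite_eq,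
      Finset.mem_univ, if_true, mul_assoc]

end Ring

section StarRing

variable {A : Type*} [Ring A] [StarRing A] {p : ℕ → A}

lemma isSelfAdjoint_coordProj (hs : ∀ n, IsSelfAdjoint (p n)) (n : ℕ) (b : Bool) :
    IsSelfAdjoint (coordProj p n b) := by
  cases b
  exacts [(IsSelfAdjoint.one A).sub (hs n), hs n]

lemma isSelfAdjoint_levelProj (hs : ∀ n, IsSelfAdjoint (p n)) (hc : ∀ m n, Commute (p m) (p n))
    (N : ℕ) (X : Set (ℕ → Bool)) : IsSelfAdjoint (levelProj p N X) := by
  induction N generalizing X with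
  | zero => rw [levelProj]; split_ifs; exacts [.one _, .zero _]
  | succ N ih =>
    exact isSelfAdjoint_sum _ fun b _ => ((ih _).commute_iff (isSelfAdjoint_coordProj hs N b)).1
      (commute_coordProj_levelProj hc N b N _).symm

end StarRing

lemma isSpectralContent_cylinderProj {A : Type*} [Ring A] [StarRing A] {p : ℕ → A}
    (hp : ∀ n, IsIdempotentElem (p n)) (hs : ∀ n, IsSelfAdjoint (p n))
    (hc : ∀ m n, Commute (p m) (p n)) : IsSpectralContent cylinders (cylinderProj p) where
  map_univ := by rw [(isCylinder_univ 0).cylinderProj_eq, levelProj_univ]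
  map_inter := by
    rintro X Y ⟨N, hX⟩ ⟨M, hY⟩
    replace hX := hX.mono (le_max_left N M)
    replace hY := hY.mono (le_max_right N M)
    rw [(hX.inter hY).cylinderProj_eq, hX.cylinderProj_eq, hY.cylinderProj_eq,
      levelProj_inter hp hc]
  map_compl := by
    rintro X ⟨N, hX⟩
    rw [hX.compl.cylinderProj_eq, hX.cylinderProj_eq, levelProj_compl]
  isSelfAdjoint := by
    rintro X ⟨N, hX⟩
    rw [hX.cylinderProj_eq]
    exact isSelfAdjoint_levelProj hs hc N X

def cylinderPremeasure {E : Type*} [NormedAddCommGroup E] [InnerProductSpace ℂ E]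
    [CompleteSpace E] {p : ℕ → E →L[ℂ] E} (hp : ∀ n, IsIdempotentElem (p n))
    (hs : ∀ n, IsSelfAdjoint (p n)) (hc : ∀ m n, Commute (p m) (p n)) :
    SpectralPremeasure (ℕ → Bool) E where
  domain := cylinders
  isSetAlgebra := isSetAlgebra_cylinders
  isCompactSystem := isCompactSystem_cylinders
  measurableSpace_eq := measurableSpace_eq_generateFrom_cylinders
  proj := cylinderProj p
  isSpectralContent := isSpectralContent_cylinderProj hp hs hc

end CantorSpace

end

/-- Given a sequence of pairwise commuting orthogonal projections `Pn` on a
complex Hilbert space `V`, there is a projection-valued Borel homomorphism on the space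
`ℕ → Bool` (with its Borel σ-algebra) extending it. -/
theorem exists_projection_valued_borel_hom
    {V : Type*} [NormedAddCommGroup V] [InnerProductSpace ℂ V] [CompleteSpace V]
    (Pn : ℕ → V →L[ℂ] V)
    (hidem : ∀ n, Pn n ∘L Pn n = Pn n)
    (hsa : ∀ n, IsSelfAdjoint (Pn n))
    (hcomm : ∀ m n, Pn m ∘L Pn n = Pn n ∘L Pn m) :
    ∃ P : Set (ℕ → Bool) → (V →L[ℂ] V),
      (∀ X, MeasurableSet X → P X ∘L P X = P X) ∧
      (∀ X, MeasurableSet X → IsSelfAdjoint (P X)) ∧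
      (∀ X Y, MeasurableSet X → MeasurableSet Y → P X ∘L P Y = P Y ∘L P X) ∧
      P Set.univ = 1 ∧
      (∀ X, MeasurableSet X → P Xᶜ = 1 - P X) ∧
      (∀ X Y, MeasurableSet X → MeasurableSet Y → P (X ∩ Y) = P X ∘L P Y) ∧
      (∀ X : ℕ → Set (ℕ → Bool), (∀ n, MeasurableSet (X n)) →
        Pairwise (Function.onFun Disjoint X) → ∀ ψ : V,
        Tendsto (fun N => ∑ n ∈ Finset.range N, P (X n) ψ) atTop
          (nhds (P (⋃ n, X n) ψ))) ∧
      (∀ n, P {f : ℕ → Bool | f n = true} = Pn n) := by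
  let Q := CantorSpace.cylinderPremeasure hidem hsa hcomm
  have hP := Q.isSpectralContent_extend
  refine ⟨Q.extend, fun X hX => (hP.isStarProjection hX).isIdempotentElem,
    fun X hX => hP.isSelfAdjoint hX, fun X Y hX hY => hP.commute hX hY, hP.map_univ,
    fun X hX => hP.map_compl hX, fun X Y hX hY => hP.map_inter hX hY,
    fun X hX hdisj ψ => Q.tendsto_sum_extend_apply hX hdisj ψ, fun n => ?_⟩
  rw [Q.extend_of_mem ⟨n + 1, CantorSpace.isCylinder_coord n true⟩]
  exact CantorSpace.cylinderProj_coord _ n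
end

section
/- Let V be a complex Hilbert space, P a projection-valued Borel homomorphism on V, and ψ ∈ V a unit vector. Let [ψ]^𝔓 denote the closure of the linear span of {P(X)ψ : X Borel ⊆ 2^ω}. If ν is a Borel probability measure on 2^ω that is absolutely continuous with respect to μ_ψ, then there exists ψ' ∈ [ψ]^𝔓 such that for every Borel X ⊆ 2^ω, ν(X) = ‖P(X)ψ'‖². -/
open Filter

/-- A projection-valued Borel homomorphism on a complex Hilbert space `V`, defined on the
Borel subsets of `2^ω = ℕ → Bool`. -/
structure PVBorelHom (V : Type*) [NormedAddCommGroup V] [InnerProductSpace ℂ V]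
    [CompleteSpace V] where
  /-- The assignment of an operator to each (Borel) subset of `ℕ → Bool`. -/
  P : Set (ℕ → Bool) → (V →L[ℂ] V)
  idem : ∀ X, MeasurableSet X → P X ∘L P X = P X
  selfAdj : ∀ X, MeasurableSet X → IsSelfAdjoint (P X)
  comm : ∀ X Y, MeasurableSet X → MeasurableSet Y → P X ∘L P Y = P Y ∘L P X
  map_univ : P Set.univ = 1
  map_compl : ∀ X, MeasurableSet X → P Xᶜ = 1 - P X
  map_inter : ∀ X Y, MeasurableSet X → MeasurableSet Y → P (X ∩ Y) = P X ∘L P Y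
  countablyAdditive : ∀ X : ℕ → Set (ℕ → Bool), (∀ n, MeasurableSet (X n)) →
    Pairwise (Function.onFun Disjoint X) → ∀ ψ : V,
    Tendsto (fun N => ∑ n ∈ Finset.range N, P (X n) ψ) atTop (nhds (P (⋃ n, X n) ψ))

/-- The cylinder `I_σ` determined by a finite binary string `σ`. -/
def cylinder {n : ℕ} (σ : Fin n → Bool) : Set (ℕ → Bool) :=
  {f | ∀ m : Fin n, f (m : ℕ) = σ m}

/-- The set `L_q` of binary sequences whose frequency statistic tends to `q`. -/
def freqLimitSet (q : ℝ) : Set (ℕ → Bool) :=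
  {f | Tendsto
    (fun N : ℕ => ((((Finset.range N).filter (fun n => f n = true)).card : ℝ) / N))
    atTop (nhds q)}

/-- The mode `[ψ]^𝔓`: the closure of the linear span of the orbit of `ψ` under the
projections `P(X)` for Borel `X`. -/
def cyclicSpace {V : Type*} [NormedAddCommGroup V] [InnerProductSpace ℂ V] [CompleteSpace V]
    (H : PVBorelHom V) (ψ : V) : Set V :=
  closure (Submodule.span ℂ
    {v : V | ∃ X : Set (ℕ → Bool), MeasurableSet X ∧ v = H.P X ψ} : Set V)

/-! With `μ = μ_ψ` and `g = √(dν/dμ)`, which is square integrable since `ν` is finite, a simple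
function `s` is sent to `s(P)ψ = ∑ c • P(s⁻¹{c})ψ`. The summands are orthogonal, so
`‖P(X) s(P)ψ‖² = ∫_X s² dμ`; hence the images of simple functions approximating `g` in `L²(μ)`
form a Cauchy sequence in the span of the `P(X)ψ`, and its limit `ψ'` satisfies
`‖P(X)ψ'‖² = ∫_X g² dμ = ν(X)`. -/

open Topology MeasureTheory

theorem norm_sum_sq_eq_sum_norm_sq_of_inner_eq_zero {𝕜 E ι : Type*} [RCLike 𝕜]
    [NormedAddCommGroup E] [InnerProductSpace 𝕜 E] (s : Finset ι) (v : ι → E)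
    (h : (s : Set ι).Pairwise fun i j => inner 𝕜 (v i) (v j) = 0) :
    ‖∑ i ∈ s, v i‖ ^ 2 = ∑ i ∈ s, ‖v i‖ ^ 2 := by
  classical
  induction s using Finset.induction_on with
  | empty => simp
  | insert a s ha ih =>
    have horth : inner 𝕜 (v a) (∑ i ∈ s, v i) = 0 := by
      rw [inner_sum]
      exact Finset.sum_eq_zero fun i hi =>
        h (by simp) (by simp [hi]) (ne_of_mem_of_not_mem hi ha).symm
    rw [Finset.sum_insert ha, Finset.sum_insert ha, sq, sq,
      norm_add_sq_eq_norm_sq_add_norm_sq_of_inner_eq_zero _ _ horth, ← sq, ← sq,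
      ih (h.mono (by simp))]

section SquareIntegrableApprox

variable {α : Type*} [MeasurableSpace α] {μ : Measure α} {g : α → ℝ} (hg : Measurable g)

local notation "approx" => SimpleFunc.approxOn g hg Set.univ 0 (Set.mem_univ 0)

theorem sq_approxOn_sub_le (n : ℕ) (x : α) : (approx n x - g x) ^ 2 ≤ g x ^ 2 := by
  have h := SimpleFunc.edist_approxOn_le hg (Set.mem_univ (0 : ℝ)) x n
  rw [edist_dist, edist_dist, ENNReal.ofReal_le_ofReal_iff dist_nonneg, Real.dist_eq,
    Real.dist_eq, zero_sub, abs_neg] at h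
  exact sq_le_sq.mpr h

theorem sq_approxOn_le (n : ℕ) (x : α) : approx n x ^ 2 ≤ 4 * g x ^ 2 := by
  nlinarith [sq_approxOn_sub_le hg n x, sq_nonneg (approx n x - 2 * g x)]

theorem integrable_sq_approxOn_sub (hg2 : Integrable (fun x => g x ^ 2) μ) (n : ℕ) :
    Integrable (fun x => (approx n x - g x) ^ 2) μ :=
  hg2.mono (((approx n).measurable.sub hg).pow_const 2).aestronglyMeasurable
    (Eventually.of_forall fun x => by
      rw [Real.norm_of_nonneg (sq_nonneg _), Real.norm_of_nonneg (sq_nonneg _)]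
      exact sq_approxOn_sub_le hg n x)

theorem tendsto_integral_sq_approxOn_sub (hg2 : Integrable (fun x => g x ^ 2) μ) :
    Tendsto (fun n => ∫ x, (approx n x - g x) ^ 2 ∂μ) atTop (𝓝 0) := by
  have hlim : ∀ x, Tendsto (fun n => (approx n x - g x) ^ 2) atTop (𝓝 0) := fun x => by
    simpa using ((SimpleFunc.tendsto_approxOn hg _ (subset_closure (Set.mem_univ (g x)))).sub_const
      (g x)).pow 2
  simpa using tendsto_integral_of_dominated_convergence _
    (fun n => (integrable_sq_approxOn_sub hg hg2 n).aestronglyMeasurable) hg2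
    (fun n => Eventually.of_forall fun x => by
      rw [Real.norm_of_nonneg (sq_nonneg _)]; exact sq_approxOn_sub_le hg n x)
    (Eventually.of_forall hlim)

theorem tendsto_integral_sq_approxOn (hg2 : Integrable (fun x => g x ^ 2) μ) :
    Tendsto (fun n => ∫ x, approx n x ^ 2 ∂μ) atTop (𝓝 (∫ x, g x ^ 2 ∂μ)) :=
  tendsto_integral_of_dominated_convergence _
    (fun n => ((approx n).measurable.pow_const 2).aestronglyMeasurable) (hg2.const_mul 4)
    (fun n => Eventually.of_forall fun x => by
      rw [Real.norm_of_nonneg (sq_nonneg _)]; exact sq_approxOn_le hg n x)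
    (Eventually.of_forall fun x =>
      (SimpleFunc.tendsto_approxOn hg _ (subset_closure (Set.mem_univ (g x)))).pow 2)

theorem integral_sq_approxOn_sub_approxOn_le (hg2 : Integrable (fun x => g x ^ 2) μ)
    (n m : ℕ) :
    ∫ x, (approx n x - approx m x) ^ 2 ∂μ
      ≤ 2 * ∫ x, (approx n x - g x) ^ 2 ∂μ + 2 * ∫ x, (approx m x - g x) ^ 2 ∂μ := by
  have hle : ∀ x, (approx n x - approx m x) ^ 2
      ≤ 2 * (approx n x - g x) ^ 2 + 2 * (approx m x - g x) ^ 2 := fun x => by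
    nlinarith [sq_nonneg (approx n x + approx m x - 2 * g x)]
  have hbound := ((integrable_sq_approxOn_sub hg hg2 n).const_mul 2).add
    ((integrable_sq_approxOn_sub hg hg2 m).const_mul 2)
  rw [← integral_const_mul, ← integral_const_mul, ← integral_add
    ((integrable_sq_approxOn_sub hg hg2 n).const_mul 2)
    ((integrable_sq_approxOn_sub hg hg2 m).const_mul 2)]
  refine integral_mono (hbound.mono
    (((approx n).measurable.sub (approx m).measurable).pow_const 2).aestronglyMeasurable
    (Eventually.of_forall fun x => ?_)) hbound hle
  rw [Real.norm_of_nonneg (sq_nonneg _), Real.norm_eq_abs]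
  exact (hle x).trans (le_abs_self _)

end SquareIntegrableApprox

theorem exists_sq_density {α : Type*} [MeasurableSpace α] {μ ν : Measure α}
    [IsFiniteMeasure ν] [SigmaFinite μ] (hνμ : ν ≪ μ) :
    ∃ g : α → ℝ, Measurable g ∧ Integrable (fun x => g x ^ 2) μ ∧
      ∀ X, ν X = ENNReal.ofReal (∫ x in X, g x ^ 2 ∂μ) := by
  refine ⟨fun x => √(ν.rnDeriv μ x).toReal, (Measure.measurable_rnDeriv ν μ).ennreal_toReal.sqrt,
    ?_, fun X => ?_⟩
  · simpa only [Real.sq_sqrt ENNReal.toReal_nonneg] using Measure.integrable_toReal_rnDeriv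
  · simp only [Real.sq_sqrt ENNReal.toReal_nonneg]
    rw [Measure.setIntegral_toReal_rnDeriv hνμ, measureReal_def, ENNReal.ofReal_toReal
      (measure_ne_top ν X)]

theorem cauchySeq_of_norm_sub_sq_le {E : Type*} [SeminormedAddCommGroup E] {u : ℕ → E}
    {δ : ℕ → ℝ} (hδ : Tendsto δ atTop (𝓝 0))
    (hu : ∀ n m, ‖u n - u m‖ ^ 2 ≤ 2 * δ n + 2 * δ m) : CauchySeq u := by
  rw [Metric.cauchySeq_iff]
  intro ε hε
  obtain ⟨N, hN⟩ := eventually_atTop.mp (hδ.eventually_lt_const (by positivity : 0 < ε ^ 2 / 4))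
  refine ⟨N, fun m hm n hn => ?_⟩
  rw [dist_eq_norm]
  refine lt_of_pow_lt_pow_left₀ 2 hε.le ?_
  linarith [hu m n, hN m hm, hN n hn]

namespace PVBorelHom

variable {V : Type*} [NormedAddCommGroup V] [InnerProductSpace ℂ V] [CompleteSpace V]
  (H : PVBorelHom V)

theorem map_empty : H.P ∅ = 0 := by
  simpa [H.map_univ] using H.map_compl Set.univ MeasurableSet.univ

theorem map_union {X Y : Set (ℕ → Bool)} (hX : MeasurableSet X) (hY : MeasurableSet Y)
    (hXY : Disjoint X Y) : H.P (X ∪ Y) = H.P X + H.P Y := by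
  have hcompl : X ∪ Y = (Xᶜ ∩ Yᶜ)ᶜ := by rw [← Set.compl_union, compl_compl]
  have hXY' : H.P X ∘L H.P Y = 0 := by
    rw [← H.map_inter X Y hX hY, Set.disjoint_iff_inter_eq_empty.mp hXY, map_empty]
  rw [hcompl, H.map_compl _ (hX.compl.inter hY.compl), H.map_inter _ _ hX.compl hY.compl,
    H.map_compl X hX, H.map_compl Y hY]
  ext v
  have hv : H.P X (H.P Y v) = 0 := congrArg (· v) hXY'
  simp only [ContinuousLinearMap.comp_sub, ContinuousLinearMap.sub_comp, sub_apply,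
    one_apply_eq_self, ContinuousLinearMap.comp_apply, hv, sub_zero, add_apply]
  abel

theorem inner_map_apply_map_apply (ψ : V) {X Y : Set (ℕ → Bool)} (hX : MeasurableSet X)
    (hY : MeasurableSet Y) : inner ℂ (H.P X ψ) (H.P Y ψ) = inner ℂ ψ (H.P (X ∩ Y) ψ) := by
  rw [(H.selfAdj X hX).isSymmetric.apply_clm, H.map_inter X Y hX hY]
  rfl

theorem inner_map_apply_map_apply_eq_zero (ψ : V) {X Y : Set (ℕ → Bool)}
    (hX : MeasurableSet X) (hY : MeasurableSet Y) (hXY : Disjoint X Y) :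
    inner ℂ (H.P X ψ) (H.P Y ψ) = 0 := by
  rw [H.inner_map_apply_map_apply ψ hX hY, Set.disjoint_iff_inter_eq_empty.mp hXY, map_empty]
  simp

noncomputable def specMeasure (ψ : V) : Measure (ℕ → Bool) :=
  Measure.ofMeasurable (fun X _ => ENNReal.ofReal (‖H.P X ψ‖ ^ 2)) (by simp [map_empty])
    fun X hX hdisj => by
      have hsum : HasSum (fun n => ‖H.P (X n) ψ‖ ^ 2) (‖H.P (⋃ n, X n) ψ‖ ^ 2) := by
        refine (hasSum_iff_tendsto_nat_of_nonneg (fun _ => sq_nonneg _) _).mpr ?_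
        have hpyth : ∀ N, ‖∑ n ∈ Finset.range N, H.P (X n) ψ‖ ^ 2
            = ∑ n ∈ Finset.range N, ‖H.P (X n) ψ‖ ^ 2 := fun N =>
          norm_sum_sq_eq_sum_norm_sq_of_inner_eq_zero _ _ fun i _ j _ hij =>
            H.inner_map_apply_map_apply_eq_zero ψ (hX i) (hX j) (hdisj hij)
        simpa only [hpyth] using ((H.countablyAdditive X hX hdisj ψ).norm.pow 2)
      rw [← hsum.tsum_eq, ENNReal.ofReal_tsum_of_nonneg (fun _ => sq_nonneg _) hsum.summable]

theorem specMeasure_apply (ψ : V) {X : Set (ℕ → Bool)} (hX : MeasurableSet X) :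
    H.specMeasure ψ X = ENNReal.ofReal (‖H.P X ψ‖ ^ 2) :=
  Measure.ofMeasurable_apply X hX

instance (ψ : V) : IsFiniteMeasure (H.specMeasure ψ) :=
  ⟨by rw [H.specMeasure_apply ψ MeasurableSet.univ]; exact ENNReal.ofReal_lt_top⟩

theorem specMeasure_map_apply (ψ : V) {X : Set (ℕ → Bool)} (hX : MeasurableSet X) :
    H.specMeasure (H.P X ψ) = (H.specMeasure ψ).restrict X := by
  ext Y hY
  rw [Measure.restrict_apply hY, H.specMeasure_apply _ hY, H.specMeasure_apply _ (hY.inter hX),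
    H.map_inter Y X hY hX, ContinuousLinearMap.comp_apply]

theorem absolutelyContinuous_specMeasure (ψ : V) {ν : Measure (ℕ → Bool)}
    (hν : ∀ X, MeasurableSet X → ‖H.P X ψ‖ = 0 → ν X = 0) : ν ≪ H.specMeasure ψ :=
  Measure.AbsolutelyContinuous.mk fun X hX h0 => hν X hX <| by
    rw [H.specMeasure_apply ψ hX, ENNReal.ofReal_eq_zero] at h0
    exact pow_eq_zero_iff two_ne_zero |>.mp (le_antisymm h0 (sq_nonneg _))

/-- `s.setToSimpleFunc (H.orbitCLM ψ) = ∑ c • P(s⁻¹{c})ψ` is the vector `s(P)ψ`. -/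
noncomputable def orbitCLM (ψ : V) (X : Set (ℕ → Bool)) : ℝ →L[ℝ] V :=
  ContinuousLinearMap.toSpanSingleton ℝ (H.P X ψ)

theorem finMeasAdditive_orbitCLM (ψ : V) (μ : Measure (ℕ → Bool)) :
    FinMeasAdditive μ (H.orbitCLM ψ) := fun X Y hX hY _ _ hXY => by
  ext
  simp [orbitCLM, H.map_union hX hY hXY]

theorem map_apply_setToSimpleFunc_orbitCLM (ψ : V) {X : Set (ℕ → Bool)} (hX : MeasurableSet X)
    (s : SimpleFunc (ℕ → Bool) ℝ) :
    H.P X (s.setToSimpleFunc (H.orbitCLM ψ)) = s.setToSimpleFunc (H.orbitCLM (H.P X ψ)) := by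
  simp only [SimpleFunc.setToSimpleFunc, orbitCLM, ContinuousLinearMap.toSpanSingleton_apply,
    map_sum]
  refine Finset.sum_congr rfl fun c _ => ?_
  rw [ContinuousLinearMap.map_smul_of_tower, ← ContinuousLinearMap.comp_apply,
    H.comm X _ hX (s.measurableSet_preimage _), ContinuousLinearMap.comp_apply]

theorem norm_setToSimpleFunc_orbitCLM_sq (ψ : V) (s : SimpleFunc (ℕ → Bool) ℝ) :
    ‖s.setToSimpleFunc (H.orbitCLM ψ)‖ ^ 2 = ∫ x, s x ^ 2 ∂(H.specMeasure ψ) := by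
  classical
  have horth : (s.range : Set ℝ).Pairwise fun c d =>
      inner ℂ (H.orbitCLM ψ (s ⁻¹' {c}) c) (H.orbitCLM ψ (s ⁻¹' {d}) d) = 0 := by
    intro c _ d _ hcd
    simp only [orbitCLM, ContinuousLinearMap.toSpanSingleton_apply, ← Complex.coe_smul,
      inner_smul_left, inner_smul_right, H.inner_map_apply_map_apply_eq_zero ψ
        (s.measurableSet_preimage _) (s.measurableSet_preimage _)
        ((Set.disjoint_singleton.mpr hcd).preimage s), mul_zero]
  have hintegral : ∫ x, s x ^ 2 ∂(H.specMeasure ψ)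
      = ∑ c ∈ s.range, (H.specMeasure ψ).real (s ⁻¹' {c}) • c ^ 2 := by
    rw [← SimpleFunc.map_integral s (· ^ 2) (SimpleFunc.integrable_of_isFiniteMeasure _) (by simp),
      SimpleFunc.integral_eq_integral _ (SimpleFunc.integrable_of_isFiniteMeasure _)]
    rfl
  rw [SimpleFunc.setToSimpleFunc, norm_sum_sq_eq_sum_norm_sq_of_inner_eq_zero _ _ horth,
    hintegral]
  refine Finset.sum_congr rfl fun c _ => ?_
  rw [orbitCLM, ContinuousLinearMap.toSpanSingleton_apply, norm_smul, mul_pow, smul_eq_mul,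
    measureReal_def, H.specMeasure_apply ψ (s.measurableSet_preimage _),
    ENNReal.toReal_ofReal (sq_nonneg _), Real.norm_eq_abs, sq_abs, mul_comm]

theorem norm_map_apply_setToSimpleFunc_orbitCLM_sq (ψ : V) {X : Set (ℕ → Bool)}
    (hX : MeasurableSet X) (s : SimpleFunc (ℕ → Bool) ℝ) :
    ‖H.P X (s.setToSimpleFunc (H.orbitCLM ψ))‖ ^ 2 = ∫ x in X, s x ^ 2 ∂(H.specMeasure ψ) := by
  rw [H.map_apply_setToSimpleFunc_orbitCLM ψ hX, norm_setToSimpleFunc_orbitCLM_sq,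
    H.specMeasure_map_apply ψ hX]

theorem norm_setToSimpleFunc_orbitCLM_sub_sq (ψ : V) (s t : SimpleFunc (ℕ → Bool) ℝ) :
    ‖s.setToSimpleFunc (H.orbitCLM ψ) - t.setToSimpleFunc (H.orbitCLM ψ)‖ ^ 2
      = ∫ x, (s x - t x) ^ 2 ∂(H.specMeasure ψ) := by
  rw [← SimpleFunc.setToSimpleFunc_sub _ (H.finMeasAdditive_orbitCLM ψ (H.specMeasure ψ))
    (s.integrable_of_isFiniteMeasure) (t.integrable_of_isFiniteMeasure),
    norm_setToSimpleFunc_orbitCLM_sq]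
  rfl

theorem setToSimpleFunc_orbitCLM_mem_span (ψ : V) (s : SimpleFunc (ℕ → Bool) ℝ) :
    s.setToSimpleFunc (H.orbitCLM ψ)
      ∈ Submodule.span ℂ {v : V | ∃ X : Set (ℕ → Bool), MeasurableSet X ∧ v = H.P X ψ} :=
  Submodule.sum_mem _ fun c _ => Submodule.smul_of_tower_mem _ c
    (Submodule.subset_span ⟨_, s.measurableSet_preimage _, rfl⟩)

end PVBorelHom

theorem exists_vector_of_absolutelyContinuous_general
    {V : Type*} [NormedAddCommGroup V] [InnerProductSpace ℂ V] [CompleteSpace V]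
    (H : PVBorelHom V) (ψ : V)
    (ν : MeasureTheory.Measure (ℕ → Bool)) [MeasureTheory.IsProbabilityMeasure ν]
    (hac : ∀ X : Set (ℕ → Bool), MeasurableSet X → ‖H.P X ψ‖ = 0 → ν X = 0) :
    ∃ ψ' ∈ cyclicSpace H ψ, ∀ X : Set (ℕ → Bool), MeasurableSet X →
      ν X = ENNReal.ofReal (‖H.P X ψ'‖ ^ 2) := by
  obtain ⟨g, hg, hg2, hν⟩ := exists_sq_density (H.absolutelyContinuous_specMeasure ψ hac)
  set s := SimpleFunc.approxOn g hg Set.univ 0 (Set.mem_univ 0)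
  set u := fun n => (s n).setToSimpleFunc (H.orbitCLM ψ)
  have hu : CauchySeq u := by
    refine cauchySeq_of_norm_sub_sq_le (tendsto_integral_sq_approxOn_sub hg hg2) fun n m => ?_
    rw [H.norm_setToSimpleFunc_orbitCLM_sub_sq]
    exact integral_sq_approxOn_sub_approxOn_le hg hg2 n m
  obtain ⟨ψ', hψ'⟩ := cauchySeq_tendsto_of_complete hu
  refine ⟨ψ', mem_closure_of_tendsto hψ' (.of_forall fun n =>
    H.setToSimpleFunc_orbitCLM_mem_span ψ (s n)), fun X hX => ?_⟩
  have hPX : Tendsto (fun n => ∫ x in X, s n x ^ 2 ∂(H.specMeasure ψ)) atTop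
      (𝓝 (‖H.P X ψ'‖ ^ 2)) := by
    simpa only [u, Function.comp_def, H.norm_map_apply_setToSimpleFunc_orbitCLM_sq ψ hX] using
      (((H.P X).continuous.tendsto ψ').comp hψ').norm.pow 2
  rw [hν X, tendsto_nhds_unique (tendsto_integral_sq_approxOn hg hg2.restrict) hPX]

/-- every Borel probability measure `ν` on `2^ω` that is absolutely continuous
with respect to `μ_ψ` (for a unit vector `ψ`) arises as `μ_{ψ'}` for some `ψ' ∈ [ψ]^𝔓`. -/
theorem exists_vector_of_absolutelyContinuous
    {V : Type*} [NormedAddCommGroup V] [InnerProductSpace ℂ V] [CompleteSpace V]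
    (H : PVBorelHom V) (ψ : V) (hψ : ‖ψ‖ = 1)
    (ν : MeasureTheory.Measure (ℕ → Bool)) [MeasureTheory.IsProbabilityMeasure ν]
    (hac : ∀ X : Set (ℕ → Bool), MeasurableSet X → ‖H.P X ψ‖ = 0 → ν X = 0) :
    ∃ ψ' ∈ cyclicSpace H ψ, ∀ X : Set (ℕ → Bool), MeasurableSet X →
      ν X = ENNReal.ofReal (‖H.P X ψ'‖ ^ 2) :=
  exists_vector_of_absolutelyContinuous_general H ψ ν hac
end

section
/- Let α be a Boolean algebra such that (i) every countable subset of α has a least upper bound in α, and (ii) α satisfies the countable chain condition: every set S ⊆ α of pairwise incompatible nonzero elements (i.e. x ≠ ⊥ for all x ∈ S, and x ⊓ y = ⊥ for distinct x, y ∈ S) is countable. Then every subset of α has a least upper bound in α (equivalently, every subset has a greatest lower bound). -/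
/-- a countably complete Boolean algebra satisfying the countable chain
condition is complete. -/
theorem complete_of_countablyComplete_ccc {α : Type*} [BooleanAlgebra α]
    (hcc : ∀ S : Set α, S.Countable → ∃ b, IsLUB S b)
    (hccc : ∀ S : Set α, (∀ x ∈ S, x ≠ ⊥) →
      (S.Pairwise fun x y => x ⊓ y = ⊥) → S.Countable) :
    ∀ S : Set α, ∃ b, IsLUB S b := by
  intro S
  classical
  -- Family of antichains of nonzero elements, each below some element of S
  set F : Set (Set α) := {A | (∀ x ∈ A, x ≠ ⊥) ∧ (A.Pairwise fun x y => x ⊓ y = ⊥) ∧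
      ∀ x ∈ A, ∃ s ∈ S, x ≤ s} with hF
  have hchain : ∀ c ⊆ F, IsChain (· ⊆ ·) c → ∃ ub ∈ F, ∀ s ∈ c, s ⊆ ub := by
    intro c hcF hchain
    refine ⟨⋃₀ c, ⟨?_, ?_, ?_⟩, fun s hs => Set.subset_sUnion_of_mem hs⟩
    · rintro x ⟨A, hA, hxA⟩
      exact (hcF hA).1 x hxA
    · rintro x ⟨A, hA, hxA⟩ y ⟨B, hB, hyB⟩ hxy
      rcases hchain.total hA hB with h | h
      · exact (hcF hB).2.1 (h hxA) hyB hxy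
      · exact (hcF hA).2.1 hxA (h hyB) hxy
    · rintro x ⟨A, hA, hxA⟩
      exact (hcF hA).2.2 x hxA
  obtain ⟨A, hAmax⟩ := zorn_subset F hchain
  have hAF : A ∈ F := hAmax.prop
  have hAcount : A.Countable := hccc A hAF.1 hAF.2.1
  obtain ⟨b, hb⟩ := hcc A hAcount
  refine ⟨b, ?_, ?_⟩
  · -- b is an upper bound of S
    intro s hs
    by_contra hsb
    have hne : s \ b ≠ ⊥ := fun h => hsb (sdiff_eq_bot_iff.mp h)
    have hdisj : ∀ a ∈ A, s \ b ⊓ a = ⊥ := by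
      intro a ha
      have h1 : s \ b ⊓ a ≤ bᶜ ⊓ b := inf_le_inf (sdiff_eq (y := b) ▸ inf_le_right) (hb.1 ha)
      simpa using le_bot_iff.mp (h1.trans_eq (by simp))
    have hnotmem : s \ b ∉ A := by
      intro hmem
      have := hdisj _ hmem
      rw [inf_idem] at this
      exact hne this
    have hF' : insert (s \ b) A ∈ F := by
      refine ⟨?_, ?_, ?_⟩
      · rintro x (rfl | hx)
        · exact hne
        · exact hAF.1 x hx
      · apply hAF.2.1.insert
        intro a ha _
        exact ⟨hdisj a ha, by rw [inf_comm]; exact hdisj a ha⟩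
      · rintro x (rfl | hx)
        · exact ⟨s, hs, sdiff_le⟩
        · exact hAF.2.2 x hx
    have := hAmax.eq_of_subset hF' (Set.subset_insert _ _)
    exact hnotmem (this ▸ Set.mem_insert _ _)
  · -- b is least among upper bounds
    intro c hc
    apply hb.2
    intro x hxA
    obtain ⟨s, hsS, hxs⟩ := hAF.2.2 x hxA
    exact hxs.trans (hc hsS)
end
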